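/- Let n ≥ 1. For every weakly decreasing sequence of nonnegative integers λ_1 ≥ λ_2 ≥ ⋯ ≥ λ_n with λ_i ≤ n − i for all 1 ≤ i ≤ n, there exists a permutation π of {1,…,n} such that min{π(1),…,π(i)} − 1 = λ_i for all i. That is, the map ψ given by ψ(π)_i = min{π(1),…,π(i)} − 1 surjects onto the set of partitions fitting inside the staircase (n−1, n−2, …, 1, 0). -/
import Mathlib


open MeasureTheory

/-- `ψ(π)ᵢ = min{π(1), …, π(i)} − 1`: with 0-indexed permutation values this is the
minimum of `(π j : ℕ)` over `j ≤ i`. -/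
def psi (n : ℕ) (π : Equiv.Perm (Fin n)) (i : Fin n) : ℕ :=
  (Finset.Iic i).inf' ⟨i, Finset.mem_Iic.mpr le_rfl⟩ (fun j => (π j : ℕ))

/-- Nat-level version of `Fin.succAbove` at pivot value `c`. -/
def psiG (c x : ℕ) : ℕ := if x < c then x else x + 1

lemma psiG_mono (c : ℕ) : Monotone (psiG c) := by
  intro a b h
  unfold psiG
  split <;> split <;> omega

lemma psiG_min (c a b : ℕ) : psiG c (min a b) = min (psiG c a) (psiG c b) :=
  (psiG_mono c).map_min

lemma succAbove_val {m : ℕ} (p : Fin (m+2)) (i : Fin (m+1)) :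
    (p.succAbove i : ℕ) = psiG (p : ℕ) (i : ℕ) := by
  rw [Fin.succAbove, psiG]
  by_cases h : (i : ℕ) < (p : ℕ)
  · rw [if_pos (by simpa [Fin.lt_def] using h), if_pos h]
    simp
  · rw [if_neg (by simpa [Fin.lt_def] using h), if_neg h]
    simp

lemma psi_zero (n : ℕ) (π : Equiv.Perm (Fin n)) (h : 0 < n) :
    psi n π ⟨0, h⟩ = (π ⟨0, h⟩ : ℕ) := by
  unfold psi
  have hI : Finset.Iic (⟨0, h⟩ : Fin n) = {⟨0, h⟩} := by
    ext j
    simp [Fin.le_def, Fin.ext_iff, Nat.le_zero]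
  simp [hI]

lemma psi_succ (n : ℕ) (π : Equiv.Perm (Fin n)) (k : ℕ) (h : k + 1 < n) :
    psi n π ⟨k+1, h⟩ = min ((π ⟨k+1, h⟩ : ℕ)) (psi n π ⟨k, by omega⟩) := by
  unfold psi
  have hI : Finset.Iic (⟨k+1, h⟩ : Fin n) =
      insert ⟨k+1, h⟩ (Finset.Iic (⟨k, by omega⟩ : Fin n)) := by
    ext j
    simp only [Finset.mem_Iic, Finset.mem_insert, Fin.le_def, Fin.ext_iff]
    omega
  simp only [hI]
  have hne : (Finset.Iic (⟨k, by omega⟩ : Fin n)).Nonempty :=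
    ⟨⟨k, by omega⟩, Finset.mem_Iic.mpr le_rfl⟩
  rw [Finset.inf'_insert (H := hne)]

def buildF {m : ℕ} (p : Fin (m+2)) (π' : Equiv.Perm (Fin (m+1))) :
    Fin (m+2) → Fin (m+2) :=
  fun i => Fin.cases p (fun j => p.succAbove (π' j)) i

lemma buildF_inj {m : ℕ} (p : Fin (m+2)) (π' : Equiv.Perm (Fin (m+1))) :
    Function.Injective (buildF p π') := by
  intro a b hab
  induction a using Fin.cases with
  | zero =>
    induction b using Fin.cases with
    | zero => rfl
    | succ b =>
      exact absurd hab.symm (Fin.succAbove_ne p (π' b))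
  | succ a =>
    induction b using Fin.cases with
    | zero => exact absurd hab (Fin.succAbove_ne p (π' a))
    | succ b =>
      have : π' a = π' b := (Fin.succAbove_right_injective (p := p)) hab
      exact congrArg Fin.succ (π'.injective this)

noncomputable def buildPerm {m : ℕ} (p : Fin (m+2)) (π' : Equiv.Perm (Fin (m+1))) :
    Equiv.Perm (Fin (m+2)) :=
  Equiv.ofBijective _ (Finite.injective_iff_bijective.mp (buildF_inj p π'))

lemma buildPerm_apply {m : ℕ} (p : Fin (m+2)) (π' : Equiv.Perm (Fin (m+1))) (i : Fin (m+2)) :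
    buildPerm p π' i = buildF p π' i := rfl

lemma psi_aux : ∀ m : ℕ, ∀ lam : Fin (m+1) → ℕ,
    (∀ i j : Fin (m+1), i ≤ j → lam j ≤ lam i) →
    (∀ i : Fin (m+1), lam i ≤ m - (i : ℕ)) →
    ∃ π : Equiv.Perm (Fin (m+1)), ∀ i, psi (m+1) π i = lam i := by
  intro m
  induction m with
  | zero =>
    intro lam hdec hbound
    refine ⟨1, fun i => ?_⟩
    have h0 : i = ⟨0, by omega⟩ := by
      apply Fin.ext; omega
    subst h0
    rw [psi_zero]
    have := hbound ⟨0, by omega⟩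
    simpa using (this.antisymm (Nat.zero_le _)).symm
  | succ m ih =>
    intro lam hdec hbound
    set c : ℕ := lam 0 with hc
    have hpc : c < m + 2 := by
      have := hbound 0
      simp at this
      omega
    set p : Fin (m+2) := ⟨c, hpc⟩ with hp
    set lam' : Fin (m+1) → ℕ :=
      fun i => if lam i.succ < c then lam i.succ else m - (i : ℕ) with hlam'
    have hle : ∀ i : Fin (m+1), lam i.succ ≤ c := fun i => hdec 0 i.succ (Fin.zero_le _)
    have hb' : ∀ i : Fin (m+1), lam i.succ ≤ m - (i : ℕ) := by
      intro i
      have := hbound i.succ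
      have hv : ((i.succ : Fin (m+2)) : ℕ) = (i : ℕ) + 1 := rfl
      omega
    have hdec' : ∀ i j : Fin (m+1), i ≤ j → lam' j ≤ lam' i := by
      intro i j hij
      have h1 : lam j.succ ≤ lam i.succ := hdec i.succ j.succ (Fin.succ_le_succ_iff.mpr hij)
      have h2 := hle i
      have h3 := hle j
      have h4 := hb' i
      have h5 := hb' j
      have hij' : (i : ℕ) ≤ (j : ℕ) := Fin.le_def.mp hij
      simp only [hlam']
      split <;> split <;> omega
    have hbound' : ∀ i : Fin (m+1), lam' i ≤ m - (i : ℕ) := by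
      intro i
      have h4 := hb' i
      simp only [hlam']
      split <;> omega
    obtain ⟨π', hπ'⟩ := ih lam' hdec' hbound'
    set π : Equiv.Perm (Fin (m+2)) := buildPerm p π' with hπ
    have hπ0 : (π ⟨0, by omega⟩ : ℕ) = c := rfl
    have hπs : ∀ (k : ℕ) (hk : k < m + 1),
        (π ⟨k+1, by omega⟩ : ℕ) = psiG c ((π' ⟨k, hk⟩ : ℕ)) := by
      intro k hk
      have : π ⟨k+1, by omega⟩ = p.succAbove (π' ⟨k, hk⟩) := rfl
      rw [this, succAbove_val]
    have key : ∀ (k : ℕ) (hk : k < m + 1),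
        psi (m+2) π ⟨k+1, by omega⟩ = min c (psiG c (psi (m+1) π' ⟨k, hk⟩)) := by
      intro k
      induction k with
      | zero =>
        intro hk
        rw [psi_succ, psi_zero, psi_zero, hπ0, hπs 0 hk]
        rw [min_comm]
      | succ k ihk =>
        intro hk
        rw [psi_succ, ihk (by omega), hπs (k+1) hk,
          psi_succ (m+1) π' k hk, psiG_min]
        exact min_left_comm _ _ _
      -- note: proofs of bounds are irrelevant
    refine ⟨π, fun i => ?_⟩
    obtain ⟨iv, hiv⟩ := i
    cases iv with
    | zero =>
      rw [psi_zero]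
      exact hπ0
    | succ k =>
      have hk : k < m + 1 := by omega
      rw [key k hk, hπ' ⟨k, hk⟩]
      have hlk : lam' ⟨k, hk⟩ = if lam ⟨k+1, hiv⟩ < c then lam ⟨k+1, hiv⟩ else m - k := rfl
      have h2 : lam ⟨k+1, hiv⟩ ≤ c := hle ⟨k, hk⟩
      have h4 : lam ⟨k+1, hiv⟩ ≤ m - k := hb' ⟨k, hk⟩
      rw [hlk]
      by_cases h : lam ⟨k+1, hiv⟩ < c
      · rw [if_pos h]
        unfold psiG
        rw [if_pos h]
        omega
      · rw [if_neg h]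
        unfold psiG
        have hkm : k ≤ m := by omega
        rw [if_neg (by omega)]
        omega

theorem psi_surjective_onto_staircase (n : ℕ) (hn : 1 ≤ n) (lam : Fin n → ℕ)
    (hdec : ∀ i j : Fin n, i ≤ j → lam j ≤ lam i)
    (hbound : ∀ i : Fin n, lam i ≤ n - 1 - (i : ℕ)) :
    ∃ π : Equiv.Perm (Fin n), ∀ i : Fin n, psi n π i = lam i := by
  obtain ⟨m, rfl⟩ : ∃ m, n = m + 1 := ⟨n - 1, by omega⟩
  exact psi_aux m lam hdec (fun i => by have := hbound i; omega)
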